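/- arXiv:1211.1899 — 9 statements merged into one kernel-verified Lean document; each statement's English description precedes it below -/
import Mathlib

section
/- Let A be a {0,1}-matrix indexed by positive integers containing no rectangle all four of whose corners are ones (i.e., no i≠k, j≠l with a_{ij}=a_{il}=a_{kj}=a_{kl}=1), with at most n+1 ones in every row and at most n+1 ones in every column. Fix a row k and suppose row k contains x ones among its first r-1 entries. Then the number of cells (k,l) that are galfs (cells (k,l) for which there exists a flag (i,j) with i≠k, j≠l and a_{ij}=a_{il}=a_{kj}=1, restricting attention to entries already placed) is at most x·n^2. -/
/-! Each galf `(k, l)` is reached from a one `(k, j)` of row `k` by a step down column `j` to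
another one `(i, j)` and then along row `i` to `(i, l)`. Since `(k, j)` itself is one of the at
most `n + 1` ones of column `j`, and `(i, j)` one of the at most `n + 1` ones of row `i`, each
of the `x` ones of row `k` leads to at most `n * n` galfs. -/

open Finset

theorem exists_finset_of_card_filter_Icc_le {p : ℕ → Prop} [DecidablePred p] {c : ℕ}
    (h : ∀ m, ((Icc 1 m).filter p).card ≤ c) :
    ∃ t : Finset ℕ, t.card ≤ c ∧ ∀ j, j ∈ t ↔ 1 ≤ j ∧ p j := by
  have hbound : ∀ t : Finset ℕ, ↑t ⊆ {j | 1 ≤ j ∧ p j} → t.card ≤ c := fun t ht =>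
    (card_le_card fun j hj => mem_filter.2
      ⟨mem_Icc.2 ⟨(ht hj).1, t.le_sup (f := id) hj⟩, (ht hj).2⟩).trans (h _)
  have hfin : {j | 1 ≤ j ∧ p j}.Finite := by
    by_contra hinf
    obtain ⟨t, hts, htc⟩ := Set.Infinite.exists_subset_card_eq hinf (c + 1)
    have := hbound t hts
    omega
  exact ⟨hfin.toFinset, hbound _ (by simp), by simp⟩

theorem card_biUnion_biUnion_le {α β γ : Type*} [DecidableEq γ] {s : Finset α}
    {t : α → Finset β} {u : α → β → Finset γ} {m n : ℕ}
    (ht : ∀ a ∈ s, (t a).card ≤ m) (hu : ∀ a ∈ s, ∀ b ∈ t a, (u a b).card ≤ n) :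
    (s.biUnion fun a => (t a).biUnion (u a)).card ≤ s.card * (m * n) :=
  card_biUnion_le_card_mul _ _ _ fun a ha =>
    (card_biUnion_le_card_mul _ _ _ (hu a ha)).trans (Nat.mul_le_mul_right n (ht a ha))

theorem Set.finite_and_ncard_le_of_subset_finset {α : Type*} {s : Set α} {t : Finset α}
    {b : ℕ} (hst : s ⊆ t) (ht : t.card ≤ b) : s.Finite ∧ s.ncard ≤ b :=
  ⟨t.finite_toSet.subset hst,
    (Set.ncard_le_ncard hst t.finite_toSet).trans ((Set.ncard_coe_finset t).trans_le ht)⟩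

theorem card_erase_le_of_mem {α : Type*} [DecidableEq α] {s : Finset α} {a : α} {n : ℕ}
    (ha : a ∈ s) (hs : s.card ≤ n + 1) : (s.erase a).card ≤ n := by
  rw [card_erase_of_mem ha]
  omega

theorem stmt1_general (n : ℕ) (a : ℕ → ℕ → Bool) (k r : ℕ) (hk : 1 ≤ k)
    (hrow : ∀ i m, ((Finset.Icc 1 m).filter (fun j => a i j = true)).card ≤ n + 1)
    (hcol : ∀ j m, ((Finset.Icc 1 m).filter (fun i => a i j = true)).card ≤ n + 1)
    (hrowk : ∀ j, r ≤ j → a k j = false)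
    (x : ℕ) (hx : x = ((Finset.Ico 1 r).filter (fun j => a k j = true)).card) :
    {l : ℕ | 1 ≤ l ∧ ∃ i j, 1 ≤ i ∧ 1 ≤ j ∧ i ≠ k ∧ j ≠ l ∧
      a i j = true ∧ a i l = true ∧ a k j = true}.Finite ∧
    {l : ℕ | 1 ≤ l ∧ ∃ i j, 1 ≤ i ∧ 1 ≤ j ∧ i ≠ k ∧ j ≠ l ∧
      a i j = true ∧ a i l = true ∧ a k j = true}.ncard ≤ x * n ^ 2 := by
  choose col hcol_card hcol_mem using fun j => exists_finset_of_card_filter_Icc_le (hcol j)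
  choose row hrow_card hrow_mem using fun i => exists_finset_of_card_filter_Icc_le (hrow i)
  set J := (Ico 1 r).filter fun j => a k j = true
  refine Set.finite_and_ncard_le_of_subset_finset
    (t := J.biUnion fun j => ((col j).erase k).biUnion fun i => (row i).erase j) ?_ ?_
  · rintro l ⟨hl, i, j, hi, hj, hik, hjl, haij, hail, hakj⟩
    have hjr : j < r := by
      by_contra! hrj
      simp [hrowk j hrj] at hakj
    simp only [coe_biUnion, Set.mem_iUnion, mem_coe, mem_erase, exists_prop]
    exact ⟨j, by simp [J, hj, hjr, hakj], i, ⟨hik, (hcol_mem j i).2 ⟨hi, haij⟩⟩,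
      Ne.symm hjl, (hrow_mem i l).2 ⟨hl, hail⟩⟩
  · rw [hx, sq]
    refine card_biUnion_biUnion_le (fun j hj => ?_) (fun j hj i hi => ?_)
    · simp only [J, mem_filter, mem_Ico] at hj
      exact card_erase_le_of_mem ((hcol_mem j k).2 ⟨hk, hj.2⟩) (hcol_card j)
    · simp only [J, mem_filter, mem_Ico] at hj
      have haij := ((hcol_mem j i).1 (mem_of_mem_erase hi)).2
      exact card_erase_le_of_mem ((hrow_mem i j).2 ⟨hj.1.1, haij⟩) (hrow_card i)

/-- Lemma 3.1: in a rectangle-free `{0,1}`-matrix with row and column weights at most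
`n+1`, where rows below `k` and the entries of row `k` from column `r` on are not yet
placed, if row `k` contains `x` ones (among its first `r-1` entries), then the number
of galf cells `(k,l)` is at most `x * n^2`. -/
theorem stmt1 (n : ℕ) (a : ℕ → ℕ → Bool) (k r : ℕ) (hk : 1 ≤ k) (hr : 1 ≤ r)
    (hnorect : ¬ ∃ i j i' j', 1 ≤ i ∧ 1 ≤ j ∧ 1 ≤ i' ∧ 1 ≤ j' ∧ i ≠ i' ∧ j ≠ j' ∧
      a i j = true ∧ a i j' = true ∧ a i' j = true ∧ a i' j' = true)
    (hrow : ∀ i m, ((Finset.Icc 1 m).filter (fun j => a i j = true)).card ≤ n + 1)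
    (hcol : ∀ j m, ((Finset.Icc 1 m).filter (fun i => a i j = true)).card ≤ n + 1)
    (hbelow : ∀ i j, k < i → a i j = false)
    (hrowk : ∀ j, r ≤ j → a k j = false)
    (x : ℕ) (hx : x = ((Finset.Ico 1 r).filter (fun j => a k j = true)).card) :
    {l : ℕ | 1 ≤ l ∧ ∃ i j, 1 ≤ i ∧ 1 ≤ j ∧ i ≠ k ∧ j ≠ l ∧
      a i j = true ∧ a i l = true ∧ a k j = true}.Finite ∧
    {l : ℕ | 1 ≤ l ∧ ∃ i j, 1 ≤ i ∧ 1 ≤ j ∧ i ≠ k ∧ j ≠ l ∧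
      a i j = true ∧ a i l = true ∧ a k j = true}.ncard ≤ x * n ^ 2 :=
  stmt1_general n a k r hk hrow hcol hrowk x hx
end

section
/- For the greedy matrix A(n), the function g, where g(i) is the column index of the first one in row i, is monotonically increasing: g(i+1) ≥ g(i) for all i ≥ 1. -/
/-- Number of ones in row `k` strictly to the left of column `l` (columns `1..l-1`). -/
def rowOnes (a : ℕ → ℕ → Bool) (k l : ℕ) : ℕ :=
  ((Finset.Ico 1 l).filter (fun j => a k j = true)).card

/-- Number of ones in column `l` strictly above row `k` (rows `1..k-1`). -/
def colOnes (a : ℕ → ℕ → Bool) (k l : ℕ) : ℕ :=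
  ((Finset.Ico 1 k).filter (fun i => a i l = true)).card

/-- The greedy (first-choice) matrix `A(n)`: entries are placed row by row, left to
right; a one is placed at `(k,l)` unless the row already has `n+1` ones to the left,
the column already has `n+1` ones above, or a rectangle of ones would be created. -/
def IsGreedy (n : ℕ) (a : ℕ → ℕ → Bool) : Prop :=
  (∀ i j, i = 0 ∨ j = 0 → a i j = false) ∧
  ∀ k l, 1 ≤ k → 1 ≤ l →
    (a k l = true ↔
      rowOnes a k l < n + 1 ∧ colOnes a k l < n + 1 ∧
      ¬ ∃ i j, 1 ≤ i ∧ i < k ∧ 1 ≤ j ∧ j < l ∧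
        a i j = true ∧ a i l = true ∧ a k j = true)

/-!
If row `i + 1` had its first one in a column `l` left of the first one of row `i`, then
`(i, l)` is a zero of `A(n)` lying before every one of row `i`. Such a zero is neither
caused by the row bound nor by a rectangle (both need a one of row `i` to the left of `l`),
so column `l` is already full above row `i`, and hence also above row `i + 1`; this
forbids the one at `(i + 1, l)`.
-/

theorem colOnes_mono_row (a : ℕ → ℕ → Bool) (l : ℕ) : Monotone fun k => colOnes a k l :=
  fun _ _ hk => Finset.card_le_card <|
    Finset.filter_subset_filter _ (Finset.Ico_subset_Ico_right hk)

theorem rowOnes_eq_zero_of_forall_lt (a : ℕ → ℕ → Bool) {k l : ℕ}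
    (hrow : ∀ j, 1 ≤ j → j < l → a k j = false) : rowOnes a k l = 0 := by
  refine Finset.card_eq_zero.mpr (Finset.filter_eq_empty_iff.mpr fun j hj => ?_)
  rw [Finset.mem_Ico] at hj
  simp [hrow j hj.1 hj.2]

namespace IsGreedy

variable {n : ℕ} {a : ℕ → ℕ → Bool}

theorem colOnes_lt (h : IsGreedy n a) {k l : ℕ} (hk : 1 ≤ k) (hl : 1 ≤ l)
    (hkl : a k l = true) : colOnes a k l < n + 1 :=
  ((h.2 k l hk hl).mp hkl).2.1

theorem succ_le_colOnes_of_row_prefix_zero (h : IsGreedy n a) {k l : ℕ} (hk : 1 ≤ k)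
    (hl : 1 ≤ l) (hrow : ∀ j, 1 ≤ j → j ≤ l → a k j = false) : n + 1 ≤ colOnes a k l := by
  by_contra hcol
  have hnoRect : ¬ ∃ i j, 1 ≤ i ∧ i < k ∧ 1 ≤ j ∧ j < l ∧
      a i j = true ∧ a i l = true ∧ a k j = true := by
    rintro ⟨_, j, -, -, hj, hjl, -, -, hkj⟩
    simp [hrow j hj hjl.le] at hkj
  have hrowOnes : rowOnes a k l = 0 :=
    rowOnes_eq_zero_of_forall_lt a fun j hj hjl => hrow j hj hjl.le
  have hone := (h.2 k l hk hl).mpr ⟨by omega, by omega, hnoRect⟩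
  simp [hrow l hl le_rfl] at hone

end IsGreedy

/-- Lemma 3.2: for the greedy matrix `A(n)`, the column index `g i` of the first one
in row `i` is monotonically increasing: `g i ≤ g (i+1)`. -/
theorem stmt3 (n : ℕ) (a : ℕ → ℕ → Bool) (h : IsGreedy n a) (i : ℕ) (hi : 1 ≤ i)
    (gi gi1 : ℕ)
    (hgi : 1 ≤ gi ∧ a i gi = true ∧ ∀ j, 1 ≤ j → a i j = true → gi ≤ j)
    (hgi1 : 1 ≤ gi1 ∧ a (i + 1) gi1 = true ∧ ∀ j, 1 ≤ j → a (i + 1) j = true → gi1 ≤ j) :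
    gi ≤ gi1 := by
  obtain ⟨-, -, hfirst⟩ := hgi
  obtain ⟨hgi1, hone, -⟩ := hgi1
  by_contra! hlt
  have hzero : ∀ j, 1 ≤ j → j < gi → a i j = false := fun j hj hjg => by
    by_contra hij
    have := hfirst j hj (by simpa using hij)
    omega
  have hfull := h.succ_le_colOnes_of_row_prefix_zero hi hgi1
    fun j hj hjl => hzero j hj (by omega)
  have hbelow : colOnes a i gi1 ≤ colOnes a (i + 1) gi1 :=
    colOnes_mono_row a gi1 (Nat.le_succ i)
  have := h.colOnes_lt (by omega) hgi1 hone
  omega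
end

section
/- For the greedy matrix A(n), the function f, where f(j) is the row index of the first one in column j, is monotonically increasing: if j < k then f(j) ≤ f(k). -/
theorem rowOnes_mono (a : ℕ → ℕ → Bool) (k : ℕ) {l l' : ℕ} (hl : l ≤ l') :
    rowOnes a k l ≤ rowOnes a k l' :=
  Finset.card_le_card <| Finset.filter_subset_filter _ <| Finset.Ico_subset_Ico le_rfl hl

theorem colOnes_eq_zero {a : ℕ → ℕ → Bool} {k l : ℕ}
    (hl : ∀ i, 1 ≤ i → i < k → a i l = false) : colOnes a k l = 0 := by
  rw [colOnes, Finset.card_eq_zero, Finset.filter_eq_empty_iff]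
  intro i hi
  simp only [Finset.mem_Ico] at hi
  simp [hl i hi.1 hi.2]

namespace IsGreedy

variable {n : ℕ} {a : ℕ → ℕ → Bool}

theorem rowOnes_lt (h : IsGreedy n a) {k l : ℕ} (hk : 1 ≤ k) (hl : 1 ≤ l)
    (hkl : a k l = true) : rowOnes a k l < n + 1 :=
  ((h.2 k l hk hl).mp hkl).1

theorem apply_eq_true_of_column_empty_above (h : IsGreedy n a) {k l : ℕ} (hk : 1 ≤ k)
    (hl : 1 ≤ l) (hrow : rowOnes a k l < n + 1)
    (hcol : ∀ i, 1 ≤ i → i < k → a i l = false) : a k l = true := by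
  refine (h.2 k l hk hl).mpr ⟨hrow, by simp [colOnes_eq_zero hcol], ?_⟩
  rintro ⟨i, -, hi, hik, -, -, -, hil, -⟩
  simp [hcol i hi hik] at hil

end IsGreedy

/-- Lemma 3.3: for the greedy matrix `A(n)`, the row index `f j` of the first one in
column `j` is monotonically increasing: if `j < k` then `f j ≤ f k`. -/
theorem stmt4 (n : ℕ) (a : ℕ → ℕ → Bool) (h : IsGreedy n a) (j k : ℕ)
    (hjk : 1 ≤ j) (hjk' : j < k)
    (fj fk : ℕ)
    (hfj : 1 ≤ fj ∧ a fj j = true ∧ ∀ i, 1 ≤ i → a i j = true → fj ≤ i)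
    (hfk : 1 ≤ fk ∧ a fk k = true ∧ ∀ i, 1 ≤ i → a i k = true → fk ≤ i) :
    fj ≤ fk := by
  obtain ⟨-, -, hfj_min⟩ := hfj
  obtain ⟨hfk, hfk_one, -⟩ := hfk
  by_contra! hlt
  have hrow : rowOnes a fk j < n + 1 :=
    (rowOnes_mono a fk hjk'.le).trans_lt (h.rowOnes_lt hfk (hjk.trans hjk'.le) hfk_one)
  have hcol : ∀ i, 1 ≤ i → i < fk → a i j = false := fun i hi hifk =>
    Bool.eq_false_iff.mpr fun hij => (hfj_min i hi hij).not_gt (hifk.trans hlt)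
  exact (hfj_min fk hfk (h.apply_eq_true_of_column_empty_above hfk hjk hrow hcol)).not_gt hlt
end

section
/- The greedy matrix A(n) is symmetric: a_{ij} = a_{ji} for all i, j ≥ 1. -/
/-!
The rule deciding `a k l` reads only entries `a p q` with `p ≤ k`, `q ≤ l`, `(p, q) ≠ (k, l)`,
all of smaller index sum, and it is invariant under transposition: the row count at `(l, k)`
in the transposed matrix is the column count at `(k, l)`, and the forbidden rectangles
correspond. Induction on `i + j` then gives `a i j = a j i`.
-/

def GreedyAdmits (n : ℕ) (a : ℕ → ℕ → Bool) (k l : ℕ) : Prop :=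
  rowOnes a k l < n + 1 ∧ colOnes a k l < n + 1 ∧
    ¬ ∃ i j, 1 ≤ i ∧ i < k ∧ 1 ≤ j ∧ j < l ∧
      a i j = true ∧ a i l = true ∧ a k j = true

theorem IsGreedy.apply_eq_true_iff {n : ℕ} {a : ℕ → ℕ → Bool} (h : IsGreedy n a) {k l : ℕ}
    (hk : 1 ≤ k) (hl : 1 ≤ l) : a k l = true ↔ GreedyAdmits n a k l :=
  h.2 k l hk hl

section Congr

variable {a b : ℕ → ℕ → Bool} {k l : ℕ}

theorem rowOnes_congr (hab : ∀ j, 1 ≤ j → j < l → a k j = b k j) :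
    rowOnes a k l = rowOnes b k l := by
  unfold rowOnes
  congr 1
  exact Finset.filter_congr fun j hj => by
    rw [hab j (Finset.mem_Ico.mp hj).1 (Finset.mem_Ico.mp hj).2]

theorem colOnes_congr (hab : ∀ i, 1 ≤ i → i < k → a i l = b i l) :
    colOnes a k l = colOnes b k l := by
  unfold colOnes
  congr 1
  exact Finset.filter_congr fun i hi => by
    rw [hab i (Finset.mem_Ico.mp hi).1 (Finset.mem_Ico.mp hi).2]

theorem greedyAdmits_congr (n : ℕ) (hk : 1 ≤ k) (hl : 1 ≤ l)
    (hab : ∀ p q, 1 ≤ p → 1 ≤ q → p ≤ k → q ≤ l → p + q < k + l → a p q = b p q) :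
    GreedyAdmits n a k l ↔ GreedyAdmits n b k l := by
  unfold GreedyAdmits
  rw [rowOnes_congr fun j hj1 hjl => hab k j hk hj1 le_rfl hjl.le (by omega),
    colOnes_congr fun i hi1 hik => hab i l hi1 hl hik.le le_rfl (by omega)]
  refine and_congr_right' (and_congr_right' (not_congr (exists₂_congr fun i j => ?_)))
  refine and_congr_right fun hi1 => and_congr_right fun hik =>
    and_congr_right fun hj1 => and_congr_right fun hjl => ?_
  rw [hab i j hi1 hj1 hik.le hjl.le (by omega), hab i l hi1 hl hik.le le_rfl (by omega),
    hab k j hk hj1 le_rfl hjl.le (by omega)]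

end Congr

theorem rowOnes_swap (a : ℕ → ℕ → Bool) (k l : ℕ) :
    rowOnes (Function.swap a) l k = colOnes a k l :=
  rfl

theorem colOnes_swap (a : ℕ → ℕ → Bool) (k l : ℕ) :
    colOnes (Function.swap a) l k = rowOnes a k l :=
  rfl

theorem greedyAdmits_swap (n : ℕ) (a : ℕ → ℕ → Bool) (k l : ℕ) :
    GreedyAdmits n (Function.swap a) l k ↔ GreedyAdmits n a k l := by
  unfold GreedyAdmits
  rw [rowOnes_swap, colOnes_swap, and_left_comm, exists_comm]
  refine and_congr_right' (and_congr_right' (not_congr (exists₂_congr fun j i => ?_)))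
  tauto

/-- Theorem 3.2: the greedy matrix `A(n)` is symmetric. -/
theorem stmt5 (n : ℕ) (a : ℕ → ℕ → Bool) (h : IsGreedy n a) (i j : ℕ)
    (hi : 1 ≤ i) (hj : 1 ≤ j) : a i j = a j i := by
  induction hs : i + j using Nat.strong_induction_on generalizing i j with
  | _ s ih =>
    have hsymm : GreedyAdmits n a i j ↔ GreedyAdmits n (Function.swap a) i j :=
      greedyAdmits_congr n hi hj fun p q hp hq _ _ hpq => ih (p + q) (hs ▸ hpq) p q hp hq rfl
    rw [Bool.eq_iff_iff, h.apply_eq_true_iff hi hj, h.apply_eq_true_iff hj hi, hsymm,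
      greedyAdmits_swap n a j i]
end

section
/- For every i ≥ 1, the greedy matrix A(n) has a one on or to the left of the main diagonal in row i: there exists j with 1 ≤ j ≤ i and a_{ij}=1. -/
open Finset

theorem rowOnes_succ (a : ℕ → ℕ → Bool) (k : ℕ) {l : ℕ} (hl : 1 ≤ l) :
    rowOnes a k (l + 1) = rowOnes a k l + if a k l = true then 1 else 0 := by
  unfold rowOnes
  rw [Nat.Ico_succ_right_eq_insert_Ico hl, filter_insert]
  split_ifs
  · exact card_insert_of_notMem (fun hmem => by simp at hmem)
  · rfl

theorem sum_colOnes_eq_sum_rowOnes (a : ℕ → ℕ → Bool) (k l : ℕ) :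
    ∑ j ∈ Ico 1 l, colOnes a k j = ∑ i ∈ Ico 1 k, rowOnes a i l := by
  simp only [rowOnes, colOnes, card_filter]
  exact sum_comm

namespace IsGreedy

variable {n : ℕ} {a : ℕ → ℕ → Bool}

theorem rowOnes_le (h : IsGreedy n a) {k : ℕ} (hk : 1 ≤ k) (l : ℕ) :
    rowOnes a k l ≤ n + 1 := by
  induction l with
  | zero => simp [rowOnes]
  | succ l ih =>
    rcases Nat.eq_zero_or_pos l with rfl | hl
    · simp [rowOnes]
    rw [rowOnes_succ a k hl]
    split_ifs with hkl
    · have := ((h.2 k l hk hl).mp hkl).1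
      omega
    · simpa using ih

theorem succ_le_colOnes_of_row_eq_false (h : IsGreedy n a) {i l : ℕ} (hi : 1 ≤ i) (hl : 1 ≤ l)
    (hrow : ∀ j, 1 ≤ j → j ≤ l → a i j = false) : n + 1 ≤ colOnes a i l := by
  by_contra! hcol
  have hrowOnes : rowOnes a i l = 0 := by
    refine card_eq_zero.mpr (filter_eq_empty_iff.mpr fun j hj => ?_)
    rw [mem_Ico] at hj
    simp [hrow j hj.1 hj.2.le]
  have hil : a i l = true := by
    refine (h.2 i l hi hl).mpr ⟨by omega, hcol, ?_⟩
    rintro ⟨-, j, -, -, hj, hjl, -, -, hij⟩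
    simp [hrow j hj hjl.le] at hij
  simp [hrow l hl le_rfl] at hil

end IsGreedy

/-- Lemma 3.4a: for every `i ≥ 1`, row `i` of the greedy matrix `A(n)` has a one on
or to the left of the main diagonal. -/
theorem stmt6 (n : ℕ) (a : ℕ → ℕ → Bool) (h : IsGreedy n a) (i : ℕ) (hi : 1 ≤ i) :
    ∃ j, 1 ≤ j ∧ j ≤ i ∧ a i j = true := by
  by_contra! hrow
  simp only [ne_eq, Bool.not_eq_true] at hrow
  have hcols : i * (n + 1) ≤ ∑ l ∈ Ico 1 (i + 1), colOnes a i l := by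
    simpa using card_nsmul_le_sum (Ico 1 (i + 1)) (colOnes a i) (n + 1) fun l hl => by
      rw [mem_Ico] at hl
      exact h.succ_le_colOnes_of_row_eq_false hi hl.1
        fun j hj hjl => hrow j hj (hjl.trans (Nat.lt_succ_iff.mp hl.2))
  have hrows : ∑ k ∈ Ico 1 i, rowOnes a k (i + 1) ≤ (i - 1) * (n + 1) := by
    simpa using sum_le_card_nsmul (Ico 1 i) (fun k => rowOnes a k (i + 1)) (n + 1)
      fun k hk => h.rowOnes_le (mem_Ico.mp hk).1 (i + 1)
  rw [sum_colOnes_eq_sum_rowOnes] at hcols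
  have := Nat.le_of_mul_le_mul_right (hcols.trans hrows) n.succ_pos
  omega
end

section
/- If p̄ = pm ≥ 2·l_max, then the wrapped matrix B contains no rectangle of ones: there do not exist i < j and k < l with b_{ik} = b_{il} = b_{jk} = b_{jl} = 1. Consequently any two distinct rows of B, viewed as blocks (sets of column indices where they are 1), intersect in at most one column. -/
/-!
Every one of `B` is a one of `a` in row `v + i`, moved horizontally by a multiple of `p̄`, so the
column stays in the same residue class mod `p̄`. Given a rectangle of ones in `B`, lift its four
entries to `a`. In each of the two rows of `a`, the two columns differ by less than `l_max`, so the
row-`v + j` columns are the row-`v + i` columns shifted by the same multiple of `p̄`: a difference of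
shifts is a multiple of `p̄` smaller than `2 l_max ≤ p̄`. Periodicity moves one row by that multiple,
which gives a rectangle of ones in `a`, contradicting the fact that `a` has none.
-/

def PeriodicAfter (a : ℕ → ℕ → Bool) (pp p : ℕ) : Prop :=
  ∀ i j, pp < i → pp < j → a (i + p) (j + p) = a i j

def IsRectangleFree (a : ℕ → ℕ → Bool) : Prop :=
  ¬ ∃ i j i' j', 1 ≤ i ∧ 1 ≤ j ∧ 1 ≤ i' ∧ 1 ≤ j' ∧ i ≠ i' ∧ j ≠ j' ∧
    a i j = true ∧ a i j' = true ∧ a i' j = true ∧ a i' j' = true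

/-- Past the preperiod, the ones of a row lie in a window of `lmax` consecutive columns. -/
def RowWindow (a : ℕ → ℕ → Bool) (pp lmax : ℕ) : Prop :=
  ∀ i j1 j2, pp < i → 1 ≤ j1 → a i j1 = true → a i j2 = true → j2 + 1 ≤ j1 + lmax

def IsWrapped (B a : ℕ → ℕ → Bool) (v pbar r : ℕ) : Prop :=
  ∀ i j, 1 ≤ i → i ≤ pbar → 1 ≤ j → j ≤ pbar →
    B i j = if j ≤ i + r ∧ i ≤ j + r then a (v + i) (v + j)
            else if i + r < j then a (v + i) (v + j - pbar)
            else a (v + i) (v + j + pbar)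

variable {a B : ℕ → ℕ → Bool} {pp lmax P : ℕ}

theorem PeriodicAfter.mul_right {p : ℕ} (hper : PeriodicAfter a pp p) (m : ℕ) :
    PeriodicAfter a pp (p * m) := by
  induction m with
  | zero => simp [PeriodicAfter]
  | succ m ih =>
    intro i j hi hj
    rw [Nat.mul_succ, ← add_assoc, ← add_assoc, hper _ _ (by omega) (by omega), ih i j hi hj]

theorem Nat.add_eq_add_of_modEq_of_close {c₁ c₂ d₁ d₂ : ℕ} (h₁ : c₁ ≡ d₁ [MOD P])
    (h₂ : c₂ ≡ d₂ [MOD P]) (hc₁ : c₂ + 1 ≤ c₁ + lmax) (hc₂ : c₁ + 1 ≤ c₂ + lmax)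
    (hd₁ : d₂ + 1 ≤ d₁ + lmax) (hd₂ : d₁ + 1 ≤ d₂ + lmax) (hP : 2 * lmax ≤ P) :
    c₁ + d₂ = d₁ + c₂ :=
  (h₁.add h₂.symm).eq_of_abs_lt (abs_sub_lt_iff.mpr ⟨by omega, by omega⟩)

theorem not_modEq_add_of_ne {v i j : ℕ} (hi : 1 ≤ i) (hiP : i ≤ P) (hj : 1 ≤ j) (hjP : j ≤ P)
    (hij : i ≠ j) : ¬ v + i ≡ v + j [MOD P] := fun h =>
  hij ((Nat.ModEq.add_left_cancel' v h).eq_of_abs_lt (abs_sub_lt_iff.mpr ⟨by omega, by omega⟩))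

theorem IsRectangleFree.not_modEq_rectangle_of_le {x y c₁ c₂ d₁ d₂ : ℕ}
    (hfree : IsRectangleFree a) (hper : PeriodicAfter a pp P) (hwin : RowWindow a pp lmax)
    (hP : 2 * lmax ≤ P) (hx : pp < x) (hy : pp < y) (hxy : ¬ x ≡ y [MOD P])
    (hc₁ : pp < c₁) (hc₂ : pp < c₂) (hd₁ : pp < d₁) (hd₂ : pp < d₂) (hc : ¬ c₁ ≡ c₂ [MOD P])
    (hcd₁ : c₁ ≡ d₁ [MOD P]) (hcd₂ : c₂ ≡ d₂ [MOD P]) (hle : c₁ ≤ d₁) :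
    ¬ (a x c₁ = true ∧ a x c₂ = true ∧ a y d₁ = true ∧ a y d₂ = true) := by
  rintro ⟨hxc₁, hxc₂, hyd₁, hyd₂⟩
  have hsum := Nat.add_eq_add_of_modEq_of_close hcd₁ hcd₂ (hwin x c₁ c₂ hx (by omega) hxc₁ hxc₂)
    (hwin x c₂ c₁ hx (by omega) hxc₂ hxc₁) (hwin y d₁ d₂ hy (by omega) hyd₁ hyd₂)
    (hwin y d₂ d₁ hy (by omega) hyd₂ hyd₁) hP
  obtain ⟨s, hs⟩ := (Nat.modEq_iff_dvd' hle).mp hcd₁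
  have hshift : ∀ {z c}, pp < z → pp < c → a (z + P * s) (c + P * s) = a z c :=
    fun hz hc => hper.mul_right s _ _ hz hc
  have hrow : x + P * s ≠ y := by
    rintro rfl
    exact hxy ((Nat.modEq_iff_dvd' (by omega)).mpr ⟨s, by omega⟩)
  have hcol : d₁ ≠ d₂ := by
    rintro rfl
    exact hc (hcd₁.trans hcd₂.symm)
  refine hfree ⟨x + P * s, d₁, y, d₂, by omega, by omega, by omega, by omega, hrow, hcol,
    ?_, ?_, hyd₁, hyd₂⟩
  · rwa [show d₁ = c₁ + P * s by omega, hshift hx hc₁]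
  · rwa [show d₂ = c₂ + P * s by omega, hshift hx hc₂]

theorem IsRectangleFree.not_modEq_rectangle {x y c₁ c₂ d₁ d₂ : ℕ}
    (hfree : IsRectangleFree a) (hper : PeriodicAfter a pp P) (hwin : RowWindow a pp lmax)
    (hP : 2 * lmax ≤ P) (hx : pp < x) (hy : pp < y) (hxy : ¬ x ≡ y [MOD P])
    (hc₁ : pp < c₁) (hc₂ : pp < c₂) (hd₁ : pp < d₁) (hd₂ : pp < d₂) (hc : ¬ c₁ ≡ c₂ [MOD P])
    (hcd₁ : c₁ ≡ d₁ [MOD P]) (hcd₂ : c₂ ≡ d₂ [MOD P]) :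
    ¬ (a x c₁ = true ∧ a x c₂ = true ∧ a y d₁ = true ∧ a y d₂ = true) := by
  rcases le_total c₁ d₁ with hle | hle
  · exact hfree.not_modEq_rectangle_of_le hper hwin hP hx hy hxy hc₁ hc₂ hd₁ hd₂ hc hcd₁ hcd₂ hle
  · rintro ⟨hxc₁, hxc₂, hyd₁, hyd₂⟩
    exact hfree.not_modEq_rectangle_of_le hper hwin hP hy hx (fun h => hxy h.symm) hd₁ hd₂ hc₁ hc₂
      (fun h => hc (hcd₁.trans (h.trans hcd₂.symm))) hcd₁.symm hcd₂.symm hle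
      ⟨hyd₁, hyd₂, hxc₁, hxc₂⟩

theorem IsWrapped.exists_modEq_of_eq_true {v r i k : ℕ} (hB : IsWrapped B a v P r)
    (hv : pp + P ≤ v) (hi : 1 ≤ i) (hiP : i ≤ P) (hk : 1 ≤ k) (hkP : k ≤ P)
    (hik : B i k = true) : ∃ c, pp < c ∧ v + k ≡ c [MOD P] ∧ a (v + i) c = true := by
  rw [hB i k hi hiP hk hkP] at hik
  split_ifs at hik
  · exact ⟨v + k, by omega, rfl, hik⟩
  · exact ⟨v + k - P, by omega, ((Nat.modEq_iff_dvd' (by omega)).mpr ⟨1, by omega⟩).symm, hik⟩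
  · exact ⟨v + k + P, by omega, Nat.add_modEq_right.symm, hik⟩

theorem IsWrapped.not_rectangle {v r i j k l : ℕ} (hB : IsWrapped B a v P r)
    (hfree : IsRectangleFree a) (hper : PeriodicAfter a pp P) (hwin : RowWindow a pp lmax)
    (hP : 2 * lmax ≤ P) (hv : pp + P ≤ v) (hi : 1 ≤ i) (hiP : i ≤ P) (hj : 1 ≤ j) (hjP : j ≤ P)
    (hk : 1 ≤ k) (hkP : k ≤ P) (hl : 1 ≤ l) (hlP : l ≤ P) (hij : i ≠ j) (hkl : k ≠ l) :
    ¬ (B i k = true ∧ B i l = true ∧ B j k = true ∧ B j l = true) := by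
  rintro ⟨hik, hil, hjk, hjl⟩
  obtain ⟨c₁, hc₁, hkc₁, hac₁⟩ := hB.exists_modEq_of_eq_true hv hi hiP hk hkP hik
  obtain ⟨c₂, hc₂, hlc₂, hac₂⟩ := hB.exists_modEq_of_eq_true hv hi hiP hl hlP hil
  obtain ⟨d₁, hd₁, hkd₁, had₁⟩ := hB.exists_modEq_of_eq_true hv hj hjP hk hkP hjk
  obtain ⟨d₂, hd₂, hld₂, had₂⟩ := hB.exists_modEq_of_eq_true hv hj hjP hl hlP hjl
  exact hfree.not_modEq_rectangle hper hwin hP (by omega) (by omega)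
    (not_modEq_add_of_ne hi hiP hj hjP hij) hc₁ hc₂ hd₁ hd₂
    (fun h => not_modEq_add_of_ne hk hkP hl hlP hkl (hkc₁.trans (h.trans hlc₂.symm)))
    (hkc₁.symm.trans hkd₁) (hlc₂.symm.trans hld₂) ⟨hac₁, hac₂, had₁, had₂⟩

theorem stmt12_general (p pp lmax m v pbar r : ℕ) (a B : ℕ → ℕ → Bool)
    (hper : ∀ i j, pp < i → pp < j → a (i + p) (j + p) = a i j)
    (hnorect : ¬ ∃ i j i' j', 1 ≤ i ∧ 1 ≤ j ∧ 1 ≤ i' ∧ 1 ≤ j' ∧ i ≠ i' ∧ j ≠ j' ∧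
      a i j = true ∧ a i j' = true ∧ a i' j = true ∧ a i' j' = true)
    (hlmax : ∀ i j1 j2, pp < i → 1 ≤ j1 → a i j1 = true → a i j2 = true →
      j2 + 1 ≤ j1 + lmax)
    (hpbar : pbar = p * m)
    (hv : pp + pbar ≤ v)
    (hB : ∀ i j, 1 ≤ i → i ≤ pbar → 1 ≤ j → j ≤ pbar →
      B i j = if j ≤ i + r ∧ i ≤ j + r then a (v + i) (v + j)
              else if i + r < j then a (v + i) (v + j - pbar)
              else a (v + i) (v + j + pbar))
    (hlen : 2 * lmax ≤ pbar) :
    (¬ ∃ i j k l, 1 ≤ i ∧ i < j ∧ j ≤ pbar ∧ 1 ≤ k ∧ k < l ∧ l ≤ pbar ∧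
      B i k = true ∧ B i l = true ∧ B j k = true ∧ B j l = true) ∧
    ∀ i j, 1 ≤ i → i ≤ pbar → 1 ≤ j → j ≤ pbar → i ≠ j →
      ((Finset.Icc 1 pbar).filter (fun c => B i c = true ∧ B j c = true)).card ≤ 1 := by
  have hperiod : PeriodicAfter a pp pbar := hpbar ▸ PeriodicAfter.mul_right hper m
  have hwrapped : IsWrapped B a v pbar r := hB
  refine ⟨?_, fun i j hi hiP hj hjP hij => Finset.card_le_one.mpr fun k hk l hl => ?_⟩
  · rintro ⟨i, j, k, l, hi, hij, hjP, hk, hkl, hlP, hBik, hBil, hBjk, hBjl⟩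
    exact hwrapped.not_rectangle hnorect hperiod hlmax hlen hv hi (by omega) (by omega) hjP hk
      (by omega) (by omega) hlP hij.ne hkl.ne ⟨hBik, hBil, hBjk, hBjl⟩
  · simp only [Finset.mem_filter, Finset.mem_Icc] at hk hl
    by_contra hkl
    exact hwrapped.not_rectangle hnorect hperiod hlmax hlen hv hi hiP hj hjP hk.1.1 hk.1.2 hl.1.1
      hl.1.2 hij hkl ⟨hk.2.1, hl.2.1, hk.2.2, hl.2.2⟩

/-- Theorem 4.4: if `p̄ = p·m ≥ 2·l_max`, the wrapped matrix `B` contains no rectangle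
of ones; consequently any two distinct rows of `B`, viewed as blocks, meet in at most
one column. -/
theorem stmt12 (n p pp bb lmax m v pbar r : ℕ) (a B : ℕ → ℕ → Bool)
    (hp : 1 ≤ p) (hm : 1 ≤ m)
    (hsym : ∀ i j, 1 ≤ i → 1 ≤ j → a i j = a j i)
    (hper : ∀ i j, pp < i → pp < j → a (i + p) (j + p) = a i j)
    (hnorect : ¬ ∃ i j i' j', 1 ≤ i ∧ 1 ≤ j ∧ 1 ≤ i' ∧ 1 ≤ j' ∧ i ≠ i' ∧ j ≠ j' ∧
      a i j = true ∧ a i j' = true ∧ a i' j = true ∧ a i' j' = true)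
    (hrow : ∀ i, 1 ≤ i → {j : ℕ | 1 ≤ j ∧ a i j = true}.ncard = n + 1)
    (hlmax : ∀ i j1 j2, pp < i → 1 ≤ j1 → a i j1 = true → a i j2 = true →
      j2 + 1 ≤ j1 + lmax)
    (hbreadth : ∀ i j, pp < i → 1 ≤ j → a i j = true → j ≤ i + bb ∧ i ≤ j + bb)
    (hpbar : pbar = p * m) (hrdef : r = pbar / 2) (hbr : bb < r)
    (hv : pp + pbar ≤ v)
    (hB : ∀ i j, 1 ≤ i → i ≤ pbar → 1 ≤ j → j ≤ pbar →
      B i j = if j ≤ i + r ∧ i ≤ j + r then a (v + i) (v + j)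
              else if i + r < j then a (v + i) (v + j - pbar)
              else a (v + i) (v + j + pbar))
    (hlen : 2 * lmax ≤ pbar) :
    (¬ ∃ i j k l, 1 ≤ i ∧ i < j ∧ j ≤ pbar ∧ 1 ≤ k ∧ k < l ∧ l ≤ pbar ∧
      B i k = true ∧ B i l = true ∧ B j k = true ∧ B j l = true) ∧
    ∀ i j, 1 ≤ i → i ≤ pbar → 1 ≤ j → j ≤ pbar → i ≠ j →
      ((Finset.Icc 1 pbar).filter (fun c => B i c = true ∧ B j c = true)).card ≤ 1 :=
  stmt12_general p pp lmax m v pbar r a B hper hnorect hlmax hpbar hv hB hlen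
end

section
/- In any {0,1}-matrix with no rectangle of ones and at most n+1 ones in each row and column, consider a row k under construction whose entries are determined left to right by the greedy rule. If the row currently contains n ones (one short of completion), then the number of galf cells (k,i) is at most n^3. -/
/-!
Every galf column `l` of row `k` is reached by a path `k → j → i → l` through ones of the
matrix: `j` is one of the `n` ones of row `k`, `i` one of the at most `n` ones of column `j`
other than `(k, j)`, and `l` one of the at most `n` ones of row `i` other than `(i, j)`.
Hence there are at most `n ^ 3` galf columns.
-/

namespace Set

variable {α ι : Type*}

lemma encard_biUnion_le_mul {t : Set ι} (ht : t.Finite) {s : ι → Set α} {c : ℕ∞}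
    (hs : ∀ i ∈ t, (s i).encard ≤ c) : (⋃ i ∈ t, s i).encard ≤ t.encard * c := by
  calc (⋃ i ∈ t, s i).encard = (⋃ i ∈ ht.toFinset, s i).encard := by simp
    _ ≤ ∑ i ∈ ht.toFinset, (s i).encard := ht.toFinset.set_encard_biUnion_le s
    _ ≤ ht.toFinset.card • c := Finset.sum_le_card_nsmul _ _ _ (by simpa using hs)
    _ = t.encard * c := by rw [nsmul_eq_mul, ← encard_coe_eq_coe_finsetCard, ht.coe_toFinset]

lemma encard_sdiff_singleton_le {s : Set α} {x : α} {n : ℕ∞} (hx : x ∈ s)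
    (hs : s.encard ≤ n + 1) : (s \ {x}).encard ≤ n := by
  rw [← encard_sdiff_singleton_add_one hx] at hs
  exact (ENat.add_le_add_iff_right ENat.one_ne_top).1 hs

lemma encard_le_of_forall_finset_card_le {s : Set α} {c : ℕ}
    (h : ∀ t : Finset α, ↑t ⊆ s → t.card ≤ c) : s.encard ≤ c := by
  by_contra! hc
  obtain ⟨t, hts, htc⟩ := exists_subset_encard_eq (Order.add_one_le_of_lt hc)
  have htfin : t.Finite := finite_of_encard_eq_coe htc
  have := h htfin.toFinset (by simpa using hts)
  rw [← htfin.coe_toFinset, encard_coe_eq_coe_finsetCard] at htc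
  norm_cast at htc
  omega

end Set

lemma encard_setOf_pos_le_of_card_filter_Icc_le {p : ℕ → Prop} [DecidablePred p] {c : ℕ}
    (h : ∀ m, ((Finset.Icc 1 m).filter p).card ≤ c) : {l | 1 ≤ l ∧ p l}.encard ≤ c := by
  refine Set.encard_le_of_forall_finset_card_le fun t ht =>
    (Finset.card_le_card ?_).trans (h (t.sup id))
  intro l hl
  obtain ⟨hl1, hpl⟩ := ht hl
  exact Finset.mem_filter.2 ⟨Finset.mem_Icc.2 ⟨hl1, Finset.le_sup (f := id) hl⟩, hpl⟩

section Galf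

variable (a : ℕ → ℕ → Bool)

def rowSupport (i : ℕ) : Set ℕ := {l | 1 ≤ l ∧ a i l = true}

def colSupport (j : ℕ) : Set ℕ := {i | 1 ≤ i ∧ a i j = true}

def galfColumns (k : ℕ) : Set ℕ :=
  {l | 1 ≤ l ∧ ∃ i j, 1 ≤ i ∧ 1 ≤ j ∧ i ≠ k ∧ j ≠ l ∧
    a i j = true ∧ a i l = true ∧ a k j = true}

lemma galfColumns_subset (k : ℕ) :
    galfColumns a k ⊆
      ⋃ j ∈ rowSupport a k, ⋃ i ∈ colSupport a j \ {k}, rowSupport a i \ {j} := by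
  rintro l ⟨hl, i, j, hi, hj, hik, hjl, haij, hail, hakj⟩
  simp only [Set.mem_iUnion]
  exact ⟨j, ⟨hj, hakj⟩, i, ⟨⟨hi, haij⟩, hik⟩, ⟨hl, hail⟩, Ne.symm hjl⟩

variable {a}

lemma encard_galfColumns_le {k w d : ℕ} (hk : 1 ≤ k)
    (hrow : ∀ i, (rowSupport a i).encard ≤ d + 1)
    (hcol : ∀ j, (colSupport a j).encard ≤ d + 1)
    (hrowk : (rowSupport a k).encard ≤ w) : (galfColumns a k).encard ≤ w * d * d := by
  have hpaths : ∀ j ∈ rowSupport a k,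
      (⋃ i ∈ colSupport a j \ {k}, rowSupport a i \ {j}).encard ≤ d * d := fun j hj => by
    have hcolj :=
      Set.encard_sdiff_singleton_le (show k ∈ colSupport a j from ⟨hk, hj.2⟩) (hcol j)
    have hrowi : ∀ i ∈ colSupport a j \ {k}, (rowSupport a i \ {j}).encard ≤ d := fun i hi =>
      Set.encard_sdiff_singleton_le (show j ∈ rowSupport a i from ⟨hj.1, hi.1.2⟩) (hrow i)
    exact (Set.encard_biUnion_le_mul (Set.finite_of_encard_le_coe hcolj) hrowi).trans
      (mul_le_mul_left hcolj _)
  calc (galfColumns a k).encard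
      ≤ (⋃ j ∈ rowSupport a k, ⋃ i ∈ colSupport a j \ {k}, rowSupport a i \ {j}).encard :=
        Set.encard_le_encard (galfColumns_subset a k)
    _ ≤ (rowSupport a k).encard * (d * d) :=
        Set.encard_biUnion_le_mul (Set.finite_of_encard_le_coe hrowk) hpaths
    _ ≤ w * d * d := by rw [mul_assoc]; exact mul_le_mul_left hrowk _

end Galf

theorem stmt14_general (n : ℕ) (a : ℕ → ℕ → Bool) (k r : ℕ) (hk : 1 ≤ k)
    (hrow : ∀ i m, ((Finset.Icc 1 m).filter (fun j => a i j = true)).card ≤ n + 1)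
    (hcol : ∀ j m, ((Finset.Icc 1 m).filter (fun i => a i j = true)).card ≤ n + 1)
    (hrowk : ∀ j, r ≤ j → a k j = false)
    (hn : ((Finset.Ico 1 r).filter (fun j => a k j = true)).card = n) :
    {l : ℕ | 1 ≤ l ∧ ∃ i j, 1 ≤ i ∧ 1 ≤ j ∧ i ≠ k ∧ j ≠ l ∧
      a i j = true ∧ a i l = true ∧ a k j = true}.Finite ∧
    {l : ℕ | 1 ≤ l ∧ ∃ i j, 1 ≤ i ∧ 1 ≤ j ∧ i ≠ k ∧ j ≠ l ∧
      a i j = true ∧ a i l = true ∧ a k j = true}.ncard ≤ n ^ 3 := by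
  change (galfColumns a k).Finite ∧ (galfColumns a k).ncard ≤ n ^ 3
  have hrow' : ∀ i, (rowSupport a i).encard ≤ n + 1 := fun i =>
    mod_cast encard_setOf_pos_le_of_card_filter_Icc_le (hrow i)
  have hcol' : ∀ j, (colSupport a j).encard ≤ n + 1 := fun j =>
    mod_cast encard_setOf_pos_le_of_card_filter_Icc_le (hcol j)
  have hrowk' : (rowSupport a k).encard ≤ n :=
    calc (rowSupport a k).encard
        ≤ ((Finset.Ico 1 r).filter (fun j => a k j = true) : Set ℕ).encard :=
          Set.encard_le_encard fun j ⟨hj, hakj⟩ => by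
            have hjr : j < r := not_le.1 fun h => by simp [hrowk j h] at hakj
            simpa using ⟨⟨hj, hjr⟩, hakj⟩
      _ = n := by rw [Set.encard_coe_eq_coe_finsetCard, hn]
  have hbound : (galfColumns a k).encard ≤ (n ^ 3 : ℕ) :=
    (encard_galfColumns_le hk hrow' hcol' hrowk').trans_eq (by push_cast; ring)
  have hfin := Set.finite_of_encard_le_coe hbound
  exact ⟨hfin, by exact_mod_cast hfin.cast_ncard_eq ▸ hbound⟩

/-- In a rectangle-free `{0,1}`-matrix with row and column weights at most `n+1`,
where row `k` is under construction (rows below `k` empty, row `k` placed only before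
column `r`) and row `k` currently contains `n` ones, the number of galf cells `(k,i)`
is at most `n^3`. -/
theorem stmt14 (n : ℕ) (a : ℕ → ℕ → Bool) (k r : ℕ) (hk : 1 ≤ k) (hr : 1 ≤ r)
    (hnorect : ¬ ∃ i j i' j', 1 ≤ i ∧ 1 ≤ j ∧ 1 ≤ i' ∧ 1 ≤ j' ∧ i ≠ i' ∧ j ≠ j' ∧
      a i j = true ∧ a i j' = true ∧ a i' j = true ∧ a i' j' = true)
    (hrow : ∀ i m, ((Finset.Icc 1 m).filter (fun j => a i j = true)).card ≤ n + 1)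
    (hcol : ∀ j m, ((Finset.Icc 1 m).filter (fun i => a i j = true)).card ≤ n + 1)
    (hbelow : ∀ i j, k < i → a i j = false)
    (hrowk : ∀ j, r ≤ j → a k j = false)
    (hn : ((Finset.Ico 1 r).filter (fun j => a k j = true)).card = n) :
    {l : ℕ | 1 ≤ l ∧ ∃ i j, 1 ≤ i ∧ 1 ≤ j ∧ i ≠ k ∧ j ≠ l ∧
      a i j = true ∧ a i l = true ∧ a k j = true}.Finite ∧
    {l : ℕ | 1 ≤ l ∧ ∃ i j, 1 ≤ i ∧ 1 ≤ j ∧ i ≠ k ∧ j ≠ l ∧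
      a i j = true ∧ a i l = true ∧ a k j = true}.ncard ≤ n ^ 3 :=
  stmt14_general n a k r hk hrow hcol hrowk hn
end

section
/- If a symmetric configuration of order n ≥ 2 has exactly n^2+n+1 points, then it is a projective plane of order n: any two distinct points lie on exactly one common block and any two distinct blocks meet in exactly one point. -/
/-!
Through a point `p` pass `n + 1` blocks, which pairwise meet only in `p`, so together they cover
`(n + 1) n + 1 = n² + n + 1` points, i.e. all of them: any two points are joined by a block, which
is unique since blocks meet in at most one point. If two blocks `b, b'` were disjoint, pick
`p ∈ b`; joining `p` to the `n + 1` points of `b'` would give `n + 1` distinct blocks through `p`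
besides `b`, one too many.
-/

open Finset

section PartialLinearSpace

variable {α : Type*} [DecidableEq α] {B : Finset (Finset α)}

theorem eq_of_mem_of_mem_of_card_inter_le_one
    (hint : ∀ b ∈ B, ∀ b' ∈ B, b ≠ b' → #(b ∩ b') ≤ 1)
    {b b' : Finset α} (hb : b ∈ B) (hb' : b' ∈ B) {p q : α} (hpq : p ≠ q)
    (hpb : p ∈ b) (hqb : q ∈ b) (hpb' : p ∈ b') (hqb' : q ∈ b') : b = b' := by
  by_contra hne
  exact hpq (card_le_one.1 (hint b hb b' hb' hne) p (mem_inter.2 ⟨hpb, hpb'⟩)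
    q (mem_inter.2 ⟨hqb, hqb'⟩))

theorem card_biUnion_erase_filter_mem
    (hint : ∀ b ∈ B, ∀ b' ∈ B, b ≠ b' → #(b ∩ b') ≤ 1)
    {k : ℕ} (hblk : ∀ b ∈ B, #b = k + 1) (p : α) :
    #((B.filter (p ∈ ·)).biUnion (·.erase p)) = #(B.filter (p ∈ ·)) * k := by
  have hdisj : ((B.filter (p ∈ ·) : Finset (Finset α)) : Set (Finset α)).PairwiseDisjoint
      (·.erase p) := by
    intro b hb b' hb' hne
    rw [mem_coe, mem_filter] at hb hb'
    exact disjoint_left.2 fun x hx hx' => hne <|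
      eq_of_mem_of_mem_of_card_inter_le_one hint hb.1 hb'.1 (ne_of_mem_erase hx)
        (mem_of_mem_erase hx) hb.2 (mem_of_mem_erase hx') hb'.2
  rw [card_biUnion hdisj, ← smul_eq_mul, ← sum_const]
  refine sum_congr rfl fun b hb => ?_
  rw [mem_filter] at hb
  rw [card_erase_of_mem hb.2, hblk b hb.1, Nat.add_sub_cancel]

theorem exists_mem_mem_of_card_le {P : Finset α} (hsub : ∀ b ∈ B, b ⊆ P)
    (hint : ∀ b ∈ B, ∀ b' ∈ B, b ≠ b' → #(b ∩ b') ≤ 1)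
    {k : ℕ} (hblk : ∀ b ∈ B, #b = k + 1) {p q : α} (hp : p ∈ P) (hq : q ∈ P) (hpq : p ≠ q)
    (hP : #P ≤ #(B.filter (p ∈ ·)) * k + 1) : ∃ b ∈ B, p ∈ b ∧ q ∈ b := by
  have hcover : (B.filter (p ∈ ·)).biUnion (·.erase p) = P.erase p := by
    refine eq_of_subset_of_card_le (fun x hx => ?_) ?_
    · obtain ⟨b, hb, hxb⟩ := mem_biUnion.1 hx
      exact mem_erase.2 ⟨ne_of_mem_erase hxb, hsub b (mem_filter.1 hb).1 (mem_of_mem_erase hxb)⟩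
    · rw [card_biUnion_erase_filter_mem hint hblk, card_erase_of_mem hp]
      omega
  obtain ⟨b, hb, hqb⟩ := mem_biUnion.1 (hcover ▸ mem_erase.2 ⟨hpq.symm, hq⟩)
  exact ⟨b, (mem_filter.1 hb).1, (mem_filter.1 hb).2, mem_of_mem_erase hqb⟩

theorem inter_nonempty_of_card_filter_mem_le {P : Finset α}
    (hint : ∀ b ∈ B, ∀ b' ∈ B, b ≠ b' → #(b ∩ b') ≤ 1)
    (hcol : ∀ p ∈ P, ∀ q ∈ P, p ≠ q → ∃ b ∈ B, p ∈ b ∧ q ∈ b)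
    {b b' : Finset α} (hb : b ∈ B) (hb' : b' ∈ B) (hb'P : b' ⊆ P) {p : α} (hp : p ∈ P)
    (hpb : p ∈ b) (hpb' : p ∉ b') (hdeg : #(B.filter (p ∈ ·)) ≤ #b') : (b ∩ b').Nonempty := by
  by_contra hdisj
  have hjoin : ∀ q ∈ b', ∃ L ∈ B, p ∈ L ∧ q ∈ L := fun q hq =>
    hcol p hp q (hb'P hq) fun h => hpb' (h ▸ hq)
  choose! L hLB hpL hqL using hjoin
  have hmaps : ∀ q ∈ b', L q ∈ (B.filter (p ∈ ·)).erase b := by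
    intro q hq
    refine mem_erase.2 ⟨fun hLb => ?_, mem_filter.2 ⟨hLB q hq, hpL q hq⟩⟩
    exact hdisj ⟨q, mem_inter.2 ⟨hLb ▸ hqL q hq, hq⟩⟩
  have hinj : Set.InjOn L b' := by
    intro q₁ hq₁ q₂ hq₂ hL
    by_contra hne
    exact hpb' (eq_of_mem_of_mem_of_card_inter_le_one hint (hLB q₁ hq₁) hb' hne (hqL q₁ hq₁)
      (hL ▸ hqL q₂ hq₂) hq₁ hq₂ ▸ hpL q₁ hq₁)
  have hbp : b ∈ B.filter (p ∈ ·) := mem_filter.2 ⟨hb, hpb⟩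
  have hle := card_le_card_of_injOn L hmaps hinj
  rw [card_erase_of_mem hbp] at hle
  have := card_pos.2 ⟨b, hbp⟩
  omega

end PartialLinearSpace

theorem stmt17_general {α : Type*} [DecidableEq α] (n : ℕ)
    (P : Finset α) (B : Finset (Finset α))
    (hsub : ∀ b ∈ B, b ⊆ P)
    (hblk : ∀ b ∈ B, b.card = n + 1)
    (hpt : ∀ p ∈ P, (B.filter (fun b => p ∈ b)).card = n + 1)
    (hint : ∀ b ∈ B, ∀ b' ∈ B, b ≠ b' → (b ∩ b').card ≤ 1)
    (hcard : P.card = n ^ 2 + n + 1) :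
    (∀ p ∈ P, ∀ q ∈ P, p ≠ q → ∃! b, b ∈ B ∧ p ∈ b ∧ q ∈ b) ∧
    (∀ b ∈ B, ∀ b' ∈ B, b ≠ b' → (b ∩ b').card = 1) := by
  have hcol : ∀ p ∈ P, ∀ q ∈ P, p ≠ q → ∃ b ∈ B, p ∈ b ∧ q ∈ b := fun p hp q hq hpq =>
    exists_mem_mem_of_card_le hsub hint hblk hp hq hpq
      (by rw [hpt p hp, hcard]; exact (by ring : n ^ 2 + n + 1 = (n + 1) * n + 1).le)
  refine ⟨fun p hp q hq hpq => ?_, fun b hb b' hb' hne => ?_⟩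
  · obtain ⟨b, hb, hpb, hqb⟩ := hcol p hp q hq hpq
    exact ⟨b, ⟨hb, hpb, hqb⟩, fun b' ⟨hb', hpb', hqb'⟩ =>
      eq_of_mem_of_mem_of_card_inter_le_one hint hb' hb hpq hpb' hqb' hpb hqb⟩
  · have hnsub : ¬b ⊆ b' := fun h =>
      hne (eq_of_subset_of_card_le h (by rw [hblk b hb, hblk b' hb']))
    obtain ⟨p, hpb, hpb'⟩ := sdiff_nonempty.2 hnsub |>.imp fun _ => mem_sdiff.1
    have hp := hsub b hb hpb
    exact le_antisymm (hint b hb b' hb' hne) <| card_pos.2 <|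
      inter_nonempty_of_card_filter_mem_le hint hcol hb hb' (hsub b' hb') hp hpb hpb'
        (by rw [hpt p hp, hblk b' hb'])

/-- A symmetric configuration of order `n ≥ 2` with exactly `n^2+n+1` points is a
projective plane of order `n`: two distinct points lie on exactly one common block
and two distinct blocks meet in exactly one point. -/
theorem stmt17 {α : Type*} [DecidableEq α] (n : ℕ) (hn : 2 ≤ n)
    (P : Finset α) (B : Finset (Finset α))
    (hPne : P.Nonempty)
    (hsub : ∀ b ∈ B, b ⊆ P)
    (hblk : ∀ b ∈ B, b.card = n + 1)
    (hpt : ∀ p ∈ P, (B.filter (fun b => p ∈ b)).card = n + 1)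
    (hint : ∀ b ∈ B, ∀ b' ∈ B, b ≠ b' → (b ∩ b').card ≤ 1)
    (hcard : P.card = n ^ 2 + n + 1) :
    (∀ p ∈ P, ∀ q ∈ P, p ≠ q → ∃! b, b ∈ B ∧ p ∈ b ∧ q ∈ b) ∧
    (∀ b ∈ B, ∀ b' ∈ B, b ≠ b' → (b ∩ b').card = 1) :=
  stmt17_general n P B hsub hblk hpt hint hcard
end

section
/- In the construction of row k of the greedy matrix A(n), the number |C| of complete columns lying strictly to the right of the column of the first one in row k (among columns of the matrix of the first k-1 rows) satisfies |C| ≤ (n³+n)·n/(n+1). -/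
/-!
Write `C` for the complete columns right of `l`. A row `i < k` with a one in `C` either has
a one at `(i, l)` or the greedy rule refused `(i, l)`; the refusal cannot come from the row
bound (the later one in `C` still had room) nor from the column bound (column `l` is not
complete), so a rectangle `(i', j'), (i', l), (i, j')` with `i' < i`, `j' < l` blocked it.
Either way row `i` has a one in a column `≤ l`, hence at most `n` ones in `C`, and double
counting the `n + 1` ones of each column of `C` gives `(n + 1)|C| ≤ n |L|` for the set `L`
of rows meeting `C`. At most `n` rows have a one in column `l`, and the blocked rows are
covered by choosing `i'` (at most `n` ways), `j'` (at most `n`) and a further one in column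
`j'` (at most `n`), so `|L| ≤ n + n³`.
-/

open Finset

theorem card_le_succ_of_card_filter_Ico_le {p : ℕ → Prop} [DecidablePred p] {n : ℕ}
    {T : Finset ℕ} (hp : ∀ j, 1 ≤ j → p j → #{x ∈ Ico 1 j | p x} ≤ n)
    (hT : ∀ j ∈ T, 1 ≤ j ∧ p j) : #T ≤ n + 1 := by
  rcases T.eq_empty_or_nonempty with rfl | hne
  · simp
  set m := T.max' hne
  obtain ⟨hm1, hmp⟩ := hT m (T.max'_mem hne)
  have hsub : T.erase m ⊆ {x ∈ Ico 1 m | p x} := by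
    intro j hj
    obtain ⟨hjm, hjT⟩ := mem_erase.1 hj
    simp only [mem_filter, mem_Ico]
    exact ⟨⟨(hT j hjT).1, lt_of_le_of_ne (T.le_max' j hjT) hjm⟩, (hT j hjT).2⟩
  have := (card_le_card hsub).trans (hp m hm1 hmp)
  rw [card_erase_of_mem (T.max'_mem hne)] at this
  omega

theorem Set.ncard_le_of_forall_finset_card_le {α : Type*} {s : Set α} {m : ℕ}
    (h : ∀ t : Finset α, ↑t ⊆ s → #t ≤ m) : s.ncard ≤ m := by
  by_cases hs : s.Finite
  · rw [Set.ncard_eq_toFinset_card s hs]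
    exact h _ (by simp)
  · simp [Set.Infinite.ncard hs]

section Greedy

variable {n : ℕ} {a : ℕ → ℕ → Bool} {i j k l : ℕ}

theorem rowOnes_mono_s19 (hlj : l ≤ j) : rowOnes a i l ≤ rowOnes a i j :=
  card_le_card (filter_subset_filter _ (Ico_subset_Ico le_rfl hlj))

theorem colOnes_mono (hik : i ≤ k) : colOnes a i j ≤ colOnes a k j :=
  card_le_card (filter_subset_filter _ (Ico_subset_Ico le_rfl hik))

theorem IsGreedy.rowOnes_le_s19 (h : IsGreedy n a) (hi : 1 ≤ i) (hj : 1 ≤ j)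
    (hij : a i j = true) : rowOnes a i j ≤ n :=
  Nat.lt_succ_iff.1 ((h.2 i j hi hj).1 hij).1

theorem IsGreedy.colOnes_le (h : IsGreedy n a) (hi : 1 ≤ i) (hj : 1 ≤ j)
    (hij : a i j = true) : colOnes a i j ≤ n :=
  Nat.lt_succ_iff.1 ((h.2 i j hi hj).1 hij).2.1

theorem IsGreedy.card_le_of_forall_mem_row (h : IsGreedy n a) (hi : 1 ≤ i) {T : Finset ℕ}
    (hT : ∀ j ∈ T, 1 ≤ j ∧ a i j = true) : #T ≤ n + 1 :=
  card_le_succ_of_card_filter_Ico_le (fun _ hj hij => h.rowOnes_le_s19 hi hj hij) hT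

theorem IsGreedy.colOnes_le_succ (h : IsGreedy n a) (hj : 1 ≤ j) : colOnes a k j ≤ n + 1 :=
  card_le_succ_of_card_filter_Ico_le (fun _ hi hij => h.colOnes_le hi hj hij)
    fun _ hi => by simp only [mem_filter, mem_Ico] at hi; exact ⟨hi.1.1, hi.2⟩

theorem IsGreedy.exists_rectangle_of_eq_false (h : IsGreedy n a) (hi : 1 ≤ i) (hl : 1 ≤ l)
    (hlj : l < j) (hij : a i j = true) (hcol : colOnes a i l < n + 1) (hil : a i l = false) :
    ∃ i' ∈ Ico 1 i, ∃ j' ∈ Ico 1 l, a i' l = true ∧ a i' j' = true ∧ a i j' = true := by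
  have hrow : rowOnes a i l < n + 1 :=
    Nat.lt_succ_iff.2 ((rowOnes_mono_s19 hlj.le).trans (h.rowOnes_le_s19 hi (by omega) hij))
  by_contra hno
  have hnot := mt (h.2 i l hi hl).2 (by simp [hil])
  refine hnot ⟨hrow, hcol, ?_⟩
  rintro ⟨i', j', hi', hii', hj', hjl, hi'j', hi'l, hij'⟩
  exact hno ⟨i', mem_Ico.2 ⟨hi', hii'⟩, j', mem_Ico.2 ⟨hj', hjl⟩, hi'l, hi'j', hij'⟩

theorem IsGreedy.exists_mem_Icc_eq_true (h : IsGreedy n a) (hi : 1 ≤ i) (hl : 1 ≤ l)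
    (hlj : l < j) (hij : a i j = true) (hcol : colOnes a i l < n + 1) :
    ∃ j' ∈ Icc 1 l, a i j' = true := by
  by_cases hil : a i l = true
  · exact ⟨l, mem_Icc.2 ⟨hl, le_rfl⟩, hil⟩
  · obtain ⟨-, -, j', hj', -, -, hij'⟩ :=
      h.exists_rectangle_of_eq_false hi hl hlj hij hcol (by simpa using hil)
    exact ⟨j', Ico_subset_Icc_self hj', hij'⟩

theorem IsGreedy.card_filter_eq_true_le (h : IsGreedy n a) (hi : 1 ≤ i) (hl : 1 ≤ l)
    (hcol : colOnes a i l < n + 1) {F : Finset ℕ} (hF : ∀ j ∈ F, l < j) :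
    #{j ∈ F | a i j = true} ≤ n := by
  rcases (F.filter fun j => a i j = true).eq_empty_or_nonempty with he | ⟨j, hj⟩
  · simp [he]
  obtain ⟨hjF, hij⟩ := mem_filter.1 hj
  obtain ⟨j', hj', hij'⟩ := h.exists_mem_Icc_eq_true hi hl (hF j hjF) hij hcol
  rw [mem_Icc] at hj'
  have hj'F : j' ∉ F.filter fun j => a i j = true := fun hm =>
    absurd (hF j' (mem_filter.1 hm).1) (by omega)
  have := h.card_le_of_forall_mem_row hi (T := insert j' (F.filter fun j => a i j = true))
    (by
      simp only [mem_insert, mem_filter]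
      rintro x (rfl | ⟨hxF, hix⟩)
      · exact ⟨hj'.1, hij'⟩
      · exact ⟨by have := hF x hxF; omega, hix⟩)
  rw [card_insert_of_notMem hj'F] at this
  omega

theorem IsGreedy.card_rows_meeting_le (h : IsGreedy n a) (hl : 1 ≤ l)
    (hcol : colOnes a k l < n + 1) {F : Finset ℕ} (hF : ∀ j ∈ F, l < j) :
    #{i ∈ Ico 1 k | ∃ j ∈ F, a i j = true} ≤ n ^ 3 + n := by
  set R : Finset ℕ := {i ∈ Ico 1 k | a i l = true}
  set blocked := R.biUnion fun i' =>
    ({j' ∈ Ico 1 l | a i' j' = true} : Finset ℕ).biUnion fun j' =>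
      ({i ∈ Ico 1 k | a i j' = true} : Finset ℕ).erase i'
  have hR : #R ≤ n := Nat.lt_succ_iff.1 hcol
  have hblocked : #blocked ≤ n ^ 3 := by
    refine (card_biUnion_le_card_mul _ _ (n * n) fun i' hi' => ?_).trans ?_
    · simp only [R, mem_filter, mem_Ico] at hi'
      refine (card_biUnion_le_card_mul _ _ n fun j' hj' => ?_).trans ?_
      · simp only [mem_filter, mem_Ico] at hj'
        have hmem : i' ∈ ({i ∈ Ico 1 k | a i j' = true} : Finset ℕ) := by
          simp only [mem_filter, mem_Ico]
          exact ⟨hi'.1, hj'.2⟩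
        rw [card_erase_of_mem hmem]
        have := h.colOnes_le_succ (k := k) hj'.1.1
        unfold colOnes at this
        omega
      · exact Nat.mul_le_mul_right n (h.rowOnes_le_s19 hi'.1.1 hl hi'.2)
    · calc #R * (n * n) ≤ n * (n * n) := Nat.mul_le_mul_right _ hR
        _ = n ^ 3 := by ring
  have hsub : ({i ∈ Ico 1 k | ∃ j ∈ F, a i j = true} : Finset ℕ) ⊆ R ∪ blocked := by
    intro i hi
    simp only [mem_filter, mem_Ico] at hi
    obtain ⟨⟨hi1, hik⟩, j, hjF, hij⟩ := hi
    rw [mem_union]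
    by_cases hil : a i l = true
    · exact Or.inl (mem_filter.2 ⟨mem_Ico.2 ⟨hi1, hik⟩, hil⟩)
    obtain ⟨i', hi', j', hj', hi'l, hi'j', hij'⟩ := h.exists_rectangle_of_eq_false hi1 hl
      (hF j hjF) hij ((colOnes_mono hik.le).trans_lt hcol) (by simpa using hil)
    rw [mem_Ico] at hi'
    refine Or.inr (mem_biUnion.2 ⟨i', ?_, mem_biUnion.2 ⟨j', mem_filter.2 ⟨hj', hi'j'⟩, ?_⟩⟩)
    · exact mem_filter.2 ⟨mem_Ico.2 ⟨hi'.1, by omega⟩, hi'l⟩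
    · exact mem_erase.2 ⟨by omega, mem_filter.2 ⟨mem_Ico.2 ⟨hi1, hik⟩, hij'⟩⟩
  calc _ ≤ #(R ∪ blocked) := card_le_card hsub
    _ ≤ #R + #blocked := card_union_le _ _
    _ ≤ n ^ 3 + n := by omega

theorem IsGreedy.card_mul_succ_le (h : IsGreedy n a) (hl : 1 ≤ l)
    (hcol : colOnes a k l < n + 1) {F : Finset ℕ}
    (hF : ∀ j ∈ F, l < j ∧ colOnes a k j = n + 1) :
    #F * (n + 1) ≤ #{i ∈ Ico 1 k | ∃ j ∈ F, a i j = true} * n := by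
  refine card_mul_le_card_mul (fun j i => a i j = true) (fun j hj => ?_) (fun i hi => ?_)
  · rw [← (hF j hj).2]
    refine card_le_card fun i hi => ?_
    obtain ⟨hik, hij⟩ := mem_filter.1 hi
    exact mem_filter.2 ⟨mem_filter.2 ⟨hik, j, hj, hij⟩, hij⟩
  · obtain ⟨hik, -⟩ := mem_filter.1 hi
    rw [mem_Ico] at hik
    exact h.card_filter_eq_true_le hik.1 hl ((colOnes_mono hik.2.le).trans_lt hcol)
      fun j hj => (hF j hj).1

end Greedy

theorem stmt19_general (n : ℕ) (a : ℕ → ℕ → Bool) (h : IsGreedy n a) (k l : ℕ)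
    (hl : 1 ≤ l ∧ colOnes a k l < n + 1 ∧
      ∀ j, 1 ≤ j → colOnes a k j < n + 1 → l ≤ j) :
    ({j : ℕ | l < j ∧ colOnes a k j = n + 1}.ncard : ℚ) ≤
      ((n : ℚ) ^ 3 + n) * n / (n + 1) := by
  obtain ⟨hl1, hlc, -⟩ := hl
  have hcard : {j : ℕ | l < j ∧ colOnes a k j = n + 1}.ncard ≤ (n ^ 3 + n) * n / (n + 1) := by
    refine Set.ncard_le_of_forall_finset_card_le fun F hF => ?_
    rw [Nat.le_div_iff_mul_le n.succ_pos]
    exact (h.card_mul_succ_le hl1 hlc fun j hj => hF hj).trans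
      (Nat.mul_le_mul_right n (h.card_rows_meeting_le hl1 hlc fun j hj => (hF hj).1))
  calc ({j : ℕ | l < j ∧ colOnes a k j = n + 1}.ncard : ℚ)
      ≤ (((n ^ 3 + n) * n / (n + 1) : ℕ) : ℚ) := by exact_mod_cast hcard
    _ ≤ ((n : ℚ) ^ 3 + n) * n / (n + 1) := by
      exact_mod_cast Nat.cast_div_le (α := ℚ) (m := (n ^ 3 + n) * n) (n := n + 1)

/-- In the construction of row `k` of the greedy matrix `A(n)`, the number of
complete columns strictly to the right of column `l` (the first non-complete column
of the matrix of the first `k-1` rows) is at most `(n^3+n)·n/(n+1)`. -/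
theorem stmt19 (n : ℕ) (a : ℕ → ℕ → Bool) (h : IsGreedy n a) (k l : ℕ) (hk : 2 ≤ k)
    (hl : 1 ≤ l ∧ colOnes a k l < n + 1 ∧
      ∀ j, 1 ≤ j → colOnes a k j < n + 1 → l ≤ j) :
    ({j : ℕ | l < j ∧ colOnes a k j = n + 1}.ncard : ℚ) ≤
      ((n : ℚ) ^ 3 + n) * n / (n + 1) :=
  stmt19_general n a h k l hl
end
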